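/- arXiv:1510.06862 — 5 statements merged into one kernel-verified Lean document; each statement's English description precedes it below -/
import Mathlib

section
/- Let D be a profinite group and (H_n)_{n≥1} a descending sequence of open subgroups of D (H_{n+1} ⊆ H_n) with intersection H = ⋂_{n≥1} H_n. For a closed subgroup L of D write L^{ab} for the quotient of L by the topological closure of its commutator subgroup. Then the natural homomorphism H^{ab} → lim←_n H_n^{ab}, induced by the inclusions H ⊆ H_n, where the transition maps H_{n+1}^{ab} → H_n^{ab} of the inverse system are induced by the inclusions H_{n+1} ⊆ H_n, is bijective. -/
section

variable {D : Type*} [Group D] [TopologicalSpace D] [IsTopologicalGroup D]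

/-- For a subgroup `L` of a topological group `D`, the quotient `L^{ab}` of `L` by the
topological closure of its commutator subgroup. -/
abbrev ClosedAbelianization (L : Subgroup D) : Type _ :=
  ↥L ⧸ (commutator ↥L).topologicalClosure

/-- The homomorphism `L'^{ab} → L^{ab}` induced by an inclusion `L' ≤ L` of subgroups. -/
def closedAbelianizationMap {L' L : Subgroup D} (h : L' ≤ L) :
    ClosedAbelianization L' →* ClosedAbelianization L :=
  QuotientGroup.map _ _ (Subgroup.inclusion h) (by
    have hcont : Continuous (Subgroup.inclusion h) :=
      Continuous.subtype_mk continuous_subtype_val _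
    refine Subgroup.topologicalClosure_minimal _ ?_ ?_
    · rw [← Subgroup.map_le_iff_le_comap]
      refine le_trans ?_ (Subgroup.le_topologicalClosure _)
      rw [commutator_def, Subgroup.map_commutator]
      exact Subgroup.commutator_mono le_top le_top
    · rw [Subgroup.coe_comap]
      exact (Subgroup.isClosed_topologicalClosure _).preimage hcont)

end

/-!
Injectivity: in a profinite group the closure of `⁅H, H⁆` is the intersection of the open
subgroups `U` containing it. The commutator map sends `H × H` into such a `U`, hence, by
compactness of the descending closed sets `H n × H n`, it sends some `H n × H n` into `U`; so `U`
contains the closure of `⁅H n, H n⁆`, and therefore the intersection of all of them.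

Surjectivity: a compatible family is represented by elements `g n ∈ H n` whose cosets
`g n • closure ⁅H n, H n⁆` are descending, closed and nonempty. By compactness they have a common
point, which lies in every `H n`, hence in `H`, and represents the family.
-/

section Topological

variable {G : Type*} [Group G] [TopologicalSpace G] [IsTopologicalGroup G]

theorem Subgroup.mem_topologicalClosure_commutator_iff (L : Subgroup G) (x : L) :
    x ∈ (_root_.commutator L).topologicalClosure ↔ (x : G) ∈ ⁅L, L⁆.topologicalClosure := by
  rw [← SetLike.mem_coe, Subgroup.topologicalClosure_coe, closure_subtype, ← SetLike.mem_coe,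
    Subgroup.topologicalClosure_coe, ← L.map_subtype_commutator, Subgroup.coe_map]
  rfl

theorem Subgroup.topologicalClosure_commutator_le {L : Subgroup G} (hL : IsClosed (L : Set G)) :
    ⁅L, L⁆.topologicalClosure ≤ L :=
  Subgroup.topologicalClosure_minimal _ L.commutator_le_self hL

theorem ClosedAbelianization.mk_eq_mk_iff {L : Subgroup G} (a b : L) :
    (QuotientGroup.mk a : ClosedAbelianization L) = QuotientGroup.mk b ↔
      (a : G)⁻¹ * b ∈ ⁅L, L⁆.topologicalClosure := by
  rw [QuotientGroup.eq, Subgroup.mem_topologicalClosure_commutator_iff]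
  rfl

theorem closedAbelianizationMap_mk {L' L : Subgroup G} (h : L' ≤ L) (a : L') :
    closedAbelianizationMap h (QuotientGroup.mk a) = QuotientGroup.mk (Subgroup.inclusion h a) :=
  rfl

end Topological

section Compact

variable {G : Type*} [Group G] [TopologicalSpace G] [IsTopologicalGroup G] [CompactSpace G]

open scoped commutatorElement in
theorem exists_commutator_le_of_commutator_iInf_le {ι : Type*} [Nonempty ι] {H : ι → Subgroup G}
    (hH : ∀ i, IsClosed (H i : Set G)) (hdir : Directed (· ≥ ·) H) {U : Subgroup G}
    (hU : IsOpen (U : Set G)) (hle : ⁅(⨅ i, H i : Subgroup G), ⨅ i, H i⁆ ≤ U) :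
    ∃ i, ⁅H i, H i⁆ ≤ U := by
  have hS : IsOpen ((fun p : G × G => (⁅p.1, p.2⁆ : G)) ⁻¹' U) :=
    hU.preimage (by simp only [commutatorElement_def]; fun_prop)
  have hmem : ∀ p ∈ ⋂ i, (H i : Set G) ×ˢ (H i : Set G), (⁅p.1, p.2⁆ : G) ∈ U := by
    intro p hp
    simp only [Set.mem_iInter, Set.mem_prod, SetLike.mem_coe] at hp
    exact hle (Subgroup.commutator_mem_commutator (Subgroup.mem_iInf.mpr fun i => (hp i).1)
      (Subgroup.mem_iInf.mpr fun i => (hp i).2))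
  obtain ⟨i, hi⟩ := exists_subset_nhds_of_isCompact' (V := fun i => (H i : Set G) ×ˢ (H i : Set G))
    (fun i j => (hdir i j).imp fun k hk => ⟨Set.prod_mono hk.1 hk.1, Set.prod_mono hk.2 hk.2⟩)
    (fun i => ((hH i).prod (hH i)).isCompact) (fun i => (hH i).prod (hH i))
    (fun p hp => hS.mem_nhds (hmem p hp))
  exact ⟨i, Subgroup.commutator_le.mpr fun a ha b hb => hi (Set.mk_mem_prod ha hb)⟩

theorem iInf_topologicalClosure_commutator_le [TotallyDisconnectedSpace G] {ι : Type*} [Nonempty ι]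
    {H : ι → Subgroup G} (hH : ∀ i, IsClosed (H i : Set G)) (hdir : Directed (· ≥ ·) H) :
    ⨅ i, ⁅H i, H i⁆.topologicalClosure ≤
      ⁅(⨅ i, H i : Subgroup G), ⨅ i, H i⁆.topologicalClosure := by
  intro x hx
  have hK := ProfiniteGrp.closedSubgroup_eq_sInf_open
    ⟨_, Subgroup.isClosed_topologicalClosure ⁅(⨅ i, H i : Subgroup G), ⨅ i, H i⁆⟩
  refine (SetLike.ext_iff.mp hK x).mpr (Subgroup.mem_sInf.mpr ?_)
  rintro U ⟨hU, hle⟩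
  obtain ⟨i, hi⟩ := exists_commutator_le_of_commutator_iInf_le hH hdir hU
    ((Subgroup.le_topologicalClosure _).trans hle)
  exact Subgroup.topologicalClosure_minimal _ hi (U.isClosed_of_isOpen hU)
    (Subgroup.mem_iInf.mp hx i)

theorem exists_forall_inv_mul_mem_of_inv_mul_succ_mem {K : ℕ → Subgroup G}
    (hK : ∀ n, IsClosed (K n : Set G)) (hanti : Antitone K) {g : ℕ → G}
    (hg : ∀ n, (g n)⁻¹ * g (n + 1) ∈ K n) : ∃ x, ∀ n, (g n)⁻¹ * x ∈ K n := by
  let C : ℕ → Set G := fun n => {y | (g n)⁻¹ * y ∈ K n}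
  have hC : ∀ n, IsClosed (C n) := fun n => (hK n).preimage (continuous_const_mul _)
  have hCne : ∀ n, (C n).Nonempty := fun n => ⟨g n, by simp [C, one_mem]⟩
  have hCanti : ∀ n, C (n + 1) ⊆ C n := fun n y hy => by
    simpa [C, mul_assoc] using mul_mem (hg n) (hanti n.le_succ hy)
  obtain ⟨x, hx⟩ := IsCompact.nonempty_iInter_of_sequence_nonempty_isCompact_isClosed C hCanti hCne
    (hC 0).isCompact hC
  exact ⟨x, Set.mem_iInter.mp hx⟩

end Compact

theorem closedAbelianization_bijective_to_inverse_limit_general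
    {D : Type*} [Group D] [TopologicalSpace D] [IsTopologicalGroup D]
    [CompactSpace D] [TotallyDisconnectedSpace D]
    (H : ℕ → Subgroup D) (hHopen : ∀ n, IsOpen (H n : Set D))
    (hHdesc : ∀ n, H (n + 1) ≤ H n) :
    Function.Injective
      (fun x : ClosedAbelianization (⨅ n, H n) =>
        fun n => closedAbelianizationMap (iInf_le H n) x) ∧
    Set.range
      (fun x : ClosedAbelianization (⨅ n, H n) =>
        fun n => closedAbelianizationMap (iInf_le H n) x) =
      {f : ∀ n, ClosedAbelianization (H n) |
        ∀ n, closedAbelianizationMap (hHdesc n) (f (n + 1)) = f n} := by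
  have hHclosed : ∀ n, IsClosed (H n : Set D) := fun n => (H n).isClosed_of_isOpen (hHopen n)
  have hanti : Antitone H := antitone_nat_of_succ_le hHdesc
  refine ⟨?_, Set.ext fun f => ⟨?_, fun hf => ?_⟩⟩
  · rintro ⟨a⟩ ⟨b⟩ hab
    refine (ClosedAbelianization.mk_eq_mk_iff a b).mpr <|
      iInf_topologicalClosure_commutator_le hHclosed hanti.directed_ge <|
        Subgroup.mem_iInf.mpr fun n => ?_
    exact (ClosedAbelianization.mk_eq_mk_iff _ _).mp (congrFun hab n)
  · rintro ⟨⟨a⟩, rfl⟩ n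
    rfl
  · choose g hg using fun n => QuotientGroup.mk_surjective (f n)
    have hcompat (n : ℕ) : (g n : D)⁻¹ * g (n + 1) ∈ ⁅H n, H n⁆.topologicalClosure :=
      (ClosedAbelianization.mk_eq_mk_iff (g n) (Subgroup.inclusion (hHdesc n) (g (n + 1)))).mp
        (by rw [← closedAbelianizationMap_mk, hg, hg]; exact (hf n).symm)
    obtain ⟨x, hx⟩ := exists_forall_inv_mul_mem_of_inv_mul_succ_mem
      (fun n => Subgroup.isClosed_topologicalClosure _)
      (fun m n hmn => Subgroup.topologicalClosure_mono
        (Subgroup.commutator_mono (hanti hmn) (hanti hmn))) hcompat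
    have hxH (n : ℕ) : x ∈ H n := by
      simpa using mul_mem (g n).2 (Subgroup.topologicalClosure_commutator_le (hHclosed n) (hx n))
    refine ⟨QuotientGroup.mk ⟨x, Subgroup.mem_iInf.mpr hxH⟩, funext fun n => ?_⟩
    rw [← hg n]
    exact ((ClosedAbelianization.mk_eq_mk_iff (g n) ⟨x, hxH n⟩).mpr (hx n)).symm

/-- Let `D` be a profinite group and `(H n)` a descending sequence of open
subgroups of `D` with intersection `H = ⨅ n, H n`. The natural homomorphism
`H^{ab} → lim← H_n^{ab}` induced by the inclusions `H ≤ H n` is bijective: the map from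
`H^{ab}` to the product of the `H_n^{ab}` is injective, and its range is exactly the inverse
limit, i.e. the set of families compatible with the transition maps `H_{n+1}^{ab} → H_n^{ab}`
induced by the inclusions `H (n+1) ≤ H n`. -/
theorem closedAbelianization_bijective_to_inverse_limit
    {D : Type*} [Group D] [TopologicalSpace D] [IsTopologicalGroup D]
    [CompactSpace D] [T2Space D] [TotallyDisconnectedSpace D]
    (H : ℕ → Subgroup D) (hHopen : ∀ n, IsOpen (H n : Set D))
    (hHdesc : ∀ n, H (n + 1) ≤ H n) :
    Function.Injective
      (fun x : ClosedAbelianization (⨅ n, H n) =>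
        fun n => closedAbelianizationMap (iInf_le H n) x) ∧
    Set.range
      (fun x : ClosedAbelianization (⨅ n, H n) =>
        fun n => closedAbelianizationMap (iInf_le H n) x) =
      {f : ∀ n, ClosedAbelianization (H n) |
        ∀ n, closedAbelianizationMap (hHdesc n) (f (n + 1)) = f n} :=
  closedAbelianization_bijective_to_inverse_limit_general H hHopen hHdesc
end

section
/- Let Π and G be groups, π : Π → G a surjective group homomorphism with kernel Δ, A an abelian subgroup of Δ that is normal in Π, and (G_v)_{v∈S} a family of subgroups of G. Assume: (i) for every v ∈ S, every section t of π, and every δ ∈ Δ, if t(g)·δ·t(g)⁻¹·δ⁻¹ ∈ A for all g ∈ G_v, then δ ∈ A; (ii) for all sections α, β of π, if for each v ∈ S there exists δ ∈ Δ with δ·α(g)·δ⁻¹·β(g)⁻¹ ∈ A for all g ∈ G_v, then there exists δ ∈ Δ with δ·α(g)·δ⁻¹·β(g)⁻¹ ∈ A for all g ∈ G; (iii) for all sections α, β of π with α(g)·β(g)⁻¹ ∈ A for all g ∈ G, if for each v ∈ S there exists a ∈ A with a·α(g)·a⁻¹ = β(g) for all g ∈ G_v, then there exists a ∈ A with a·α(g)·a⁻¹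 = β(g) for all g ∈ G. Then for all sections α, β of π: if for each v ∈ S there exists δ_v ∈ Δ with δ_v·α(g)·δ_v⁻¹ = β(g) for all g ∈ G_v, then there exists δ ∈ Δ with δ·α(g)·δ⁻¹ = β(g) for all g ∈ G. -/
/-- Devissage step: let `π : P → G` be a surjective homomorphism with kernel
`Δ = π.ker`, `A` an abelian subgroup of `Δ` normal in `P`, and `(G_v)_{v ∈ S}` a family of
subgroups of `G`. Assume:
(i) local fixed-point triviality for `Δ/A`;
(ii) the local-global principle for conjugacy of sections modulo `A`;
(iii) the local-global principle for `A`-conjugacy of sections that differ by `A`.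
Then the local-global principle for `Δ`-conjugacy of sections of `π` holds. -/
theorem local_global_conj_of_abelian_layer
    {P G : Type*} [Group P] [Group G] (π : P →* G) (hπ : Function.Surjective π)
    (A : Subgroup P) (hAker : A ≤ π.ker) (hAnormal : A.Normal)
    (hAab : ∀ a ∈ A, ∀ b ∈ A, a * b = b * a)
    {S : Type*} (Gv : S → Subgroup G)
    (hfix : ∀ (v : S) (t : G →* P), (∀ g, π (t g) = g) →
      ∀ δ ∈ π.ker, (∀ g ∈ Gv v, t g * δ * (t g)⁻¹ * δ⁻¹ ∈ A) → δ ∈ A)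
    (hmodA : ∀ α β : G →* P, (∀ g, π (α g) = g) → (∀ g, π (β g) = g) →
      (∀ v : S, ∃ δ ∈ π.ker, ∀ g ∈ Gv v, δ * α g * δ⁻¹ * (β g)⁻¹ ∈ A) →
      ∃ δ ∈ π.ker, ∀ g, δ * α g * δ⁻¹ * (β g)⁻¹ ∈ A)
    (hA : ∀ α β : G →* P, (∀ g, π (α g) = g) → (∀ g, π (β g) = g) →
      (∀ g, α g * (β g)⁻¹ ∈ A) →
      (∀ v : S, ∃ a ∈ A, ∀ g ∈ Gv v, a * α g * a⁻¹ = β g) →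
      ∃ a ∈ A, ∀ g, a * α g * a⁻¹ = β g) :
    ∀ α β : G →* P, (∀ g, π (α g) = g) → (∀ g, π (β g) = g) →
      (∀ v : S, ∃ δ ∈ π.ker, ∀ g ∈ Gv v, δ * α g * δ⁻¹ = β g) →
      ∃ δ ∈ π.ker, ∀ g, δ * α g * δ⁻¹ = β g := by
  intro α β hα hβ hloc
  obtain ⟨δ₀, hδ₀ker, hδ₀⟩ := hmodA α β hα hβ (by
    intro v
    obtain ⟨δ, hδker, hδ⟩ := hloc v
    exact ⟨δ, hδker, fun g hg => by rw [hδ g hg]; simpa using A.one_mem⟩)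
  set α' : G →* P := (MulAut.conj δ₀).toMonoidHom.comp α with hα'def
  have hα'apply : ∀ g, α' g = δ₀ * α g * δ₀⁻¹ := fun g => rfl
  have hα' : ∀ g, π (α' g) = g := by
    intro g
    have h0 : π δ₀ = 1 := hδ₀ker
    simp [hα'apply, h0, hα g]
  have hdiff : ∀ g, α' g * (β g)⁻¹ ∈ A := by
    intro g
    simpa [hα'apply, mul_assoc] using hδ₀ g
  have hlocA : ∀ v : S, ∃ a ∈ A, ∀ g ∈ Gv v, a * α' g * a⁻¹ = β g := by
    intro v
    obtain ⟨δ, hδker, hδ⟩ := hloc v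
    have hεker : δ * δ₀⁻¹ ∈ π.ker := mul_mem hδker (inv_mem hδ₀ker)
    have hconj : ∀ g ∈ Gv v, (δ * δ₀⁻¹) * α' g * (δ * δ₀⁻¹)⁻¹ = β g := by
      intro g hg
      rw [hα'apply, ← hδ g hg]
      group
    refine ⟨δ * δ₀⁻¹, ?_, hconj⟩
    have key : ∀ g ∈ Gv v, β g * (δ * δ₀⁻¹)⁻¹ * (β g)⁻¹ * ((δ * δ₀⁻¹)⁻¹)⁻¹ ∈ A := by
      intro g hg
      have heq : β g * (δ * δ₀⁻¹)⁻¹ * (β g)⁻¹ * ((δ * δ₀⁻¹)⁻¹)⁻¹ =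
          (α' g * (β g)⁻¹)⁻¹ := by
        rw [← hconj g hg]
        group
      rw [heq]
      exact A.inv_mem (hdiff g)
    have := hfix v β hβ _ (inv_mem hεker) key
    simpa [mul_inv_rev] using A.inv_mem this
  obtain ⟨a, haA, ha⟩ := hA α' β hα' hβ hdiff hlocA
  refine ⟨a * δ₀, mul_mem (hAker haA) hδ₀ker, fun g => ?_⟩
  have := ha g
  rw [hα'apply] at this
  rw [← this]
  group
end

section
/- Let Π and G be groups, π : Π → G a surjective group homomorphism with kernel Δ, and Δ = D_0 ⊇ D_1 ⊇ … ⊇ D_m = {1} a descending chain of subgroups, each D_j normal in Π, with [D_j, D_j] ⊆ D_{j+1} for all 0 ≤ j < m. Let (G_v)_{v∈S} be a family of subgroups of G. For 0 ≤ j ≤ m let π_j : Π/D_j → G denote the induced surjection, with kernel Δ/D_j, and for j < m set A_j = D_j/D_{j+1}, an abelian normal subgroup of Π/D_{j+1}. Assume for each 0 ≤ j < m: (a) for every v ∈ S, every section t of π_{j+1}, and every δ ∈ Δ/D_{j+1}, if t(g)·δ·t(g)⁻¹·δ⁻¹ ∈ A_j for all g ∈ G_v, then δ ∈ A_j; (b)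 for all sections α, β of π_{j+1} with α(g)·β(g)⁻¹ ∈ A_j for all g ∈ G, if for each v ∈ S there exists a ∈ A_j with a·α(g)·a⁻¹ = β(g) for all g ∈ G_v, then there exists a ∈ A_j with a·α(g)·a⁻¹ = β(g) for all g ∈ G. Then any two sections α, β of π such that for each v ∈ S there exists δ_v ∈ Δ with δ_v·α(g)·δ_v⁻¹ = β(g) for all g ∈ G_v, are conjugate by an element of Δ: there exists δ ∈ Δ with δ·α(g)·δ⁻¹ = β(g) for all g ∈ G. -/
/-- Local-global principle for conjugacy of sections along a filtration of the
kernel with abelian graded pieces. Here `π : P → G` is surjective with kernel `Δ = π.ker`, and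
`Δ = D 0 ⊇ D 1 ⊇ ⋯ ⊇ D m = 1` is a chain of subgroups normal in `P` with
`[D j, D j] ≤ D (j+1)`. The quotients `P/D j` are realized by groups `Q j` together with
surjections `q j : P → Q j` with kernel `D j`; the induced surjections `π_j : Q j → G` are the
`πq j`, and the abelian layer `A_j = D j / D (j+1)` is the image `(D j).map (q (j+1))` inside
`Q (j+1)`. Assuming local fixed-point triviality (a) and the local-global principle for
`A_j`-conjugacy (b) at each layer, any two sections of `π` that are locally conjugate by
elements of `Δ` are conjugate by an element of `Δ`. -/
theorem local_global_conj_of_solvable_filtration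
    {P G : Type*} [Group P] [Group G] (π : P →* G) (hπ : Function.Surjective π)
    (m : ℕ) (D : ℕ → Subgroup P)
    (hD0 : D 0 = π.ker) (hDm : D m = ⊥)
    (hDdesc : ∀ j < m, D (j + 1) ≤ D j)
    (hDnormal : ∀ j, (D j).Normal)
    (hDcomm : ∀ j < m, ⁅D j, D j⁆ ≤ D (j + 1))
    {S : Type*} (Gv : S → Subgroup G)
    (Q : ℕ → Type*) [∀ j, Group (Q j)]
    (q : ∀ j, P →* Q j) (hqsurj : ∀ j, Function.Surjective (q j))
    (hqker : ∀ j, (q j).ker = D j)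
    (πq : ∀ j, Q j →* G) (hπq : ∀ j x, πq j (q j x) = π x)
    (ha : ∀ j < m, ∀ (v : S) (t : G →* Q (j + 1)), (∀ g, πq (j + 1) (t g) = g) →
      ∀ δ ∈ (πq (j + 1)).ker,
        (∀ g ∈ Gv v, t g * δ * (t g)⁻¹ * δ⁻¹ ∈ (D j).map (q (j + 1))) →
        δ ∈ (D j).map (q (j + 1)))
    (hb : ∀ j < m, ∀ α β : G →* Q (j + 1),
      (∀ g, πq (j + 1) (α g) = g) → (∀ g, πq (j + 1) (β g) = g) →
      (∀ g, α g * (β g)⁻¹ ∈ (D j).map (q (j + 1))) →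
      (∀ v : S, ∃ a ∈ (D j).map (q (j + 1)), ∀ g ∈ Gv v, a * α g * a⁻¹ = β g) →
      ∃ a ∈ (D j).map (q (j + 1)), ∀ g, a * α g * a⁻¹ = β g)
    (α β : G →* P) (hα : ∀ g, π (α g) = g) (hβ : ∀ g, π (β g) = g)
    (hloc : ∀ v : S, ∃ δ ∈ π.ker, ∀ g ∈ Gv v, δ * α g * δ⁻¹ = β g) :
    ∃ δ ∈ π.ker, ∀ g, δ * α g * δ⁻¹ = β g := by
  -- D j ≤ π.ker for j ≤ m
  have hDsub : ∀ j, j ≤ m → D j ≤ π.ker := by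
    intro j
    induction j with
    | zero => intro _; rw [hD0]
    | succ j ih =>
      intro hj
      exact le_trans (hDdesc j (lt_of_lt_of_le (Nat.lt_succ_self j) hj))
        (ih (le_of_lt (lt_of_lt_of_le (Nat.lt_succ_self j) hj)))
  have key : ∀ j, j ≤ m → ∃ δ ∈ π.ker, ∀ g, q j (δ * α g * δ⁻¹) = q j (β g) := by
    intro j
    induction j with
    | zero =>
      intro _
      refine ⟨1, one_mem _, fun g => ?_⟩
      have h1 : α g * (β g)⁻¹ ∈ (q 0).ker := by
        rw [hqker, hD0, MonoidHom.mem_ker, map_mul, map_inv, hα, hβ, mul_inv_cancel]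
      rw [MonoidHom.mem_ker, map_mul, map_inv] at h1
      rw [one_mul, inv_one, mul_one]
      exact mul_inv_eq_one.mp h1
    | succ j ih =>
      intro hj
      have hjm : j < m := lt_of_lt_of_le (Nat.lt_succ_self j) hj
      obtain ⟨δ, hδ, hconj⟩ := ih (le_of_lt hjm)
      -- conjugated section
      set αc : G →* Q (j + 1) :=
        (q (j + 1)).comp (((MulAut.conj δ).toMonoidHom).comp α) with hαc
      set βq : G →* Q (j + 1) := (q (j + 1)).comp β with hβq
      have hαcg : ∀ g, αc g = q (j + 1) (δ * α g * δ⁻¹) := fun g => rfl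
      have hπδ : π δ = 1 := hδ
      have hsecα : ∀ g, πq (j + 1) (αc g) = g := by
        intro g
        rw [hαcg, hπq, map_mul, map_mul, map_inv, hπδ, hα, one_mul, inv_one, mul_one]
      have hsecβ : ∀ g, πq (j + 1) (βq g) = g := by
        intro g
        show πq (j + 1) (q (j + 1) (β g)) = g
        rw [hπq, hβ]
      -- difference lies in D j
      have hdiffP : ∀ g, δ * α g * δ⁻¹ * (β g)⁻¹ ∈ D j := by
        intro g
        rw [← hqker j, MonoidHom.mem_ker, map_mul, map_inv, hconj, mul_inv_cancel]
      have hdiff : ∀ g, αc g * (βq g)⁻¹ ∈ (D j).map (q (j + 1)) := by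
        intro g
        refine ⟨δ * α g * δ⁻¹ * (β g)⁻¹, hdiffP g, ?_⟩
        rw [map_mul, map_inv]
        rfl
      -- local conjugacy at level j+1 by elements of A_j
      have hlocA : ∀ v : S, ∃ a ∈ (D j).map (q (j + 1)), ∀ g ∈ Gv v,
          a * αc g * a⁻¹ = βq g := by
        intro v
        obtain ⟨δv, hδv, hδvconj⟩ := hloc v
        set ε : P := δv * δ⁻¹ with hε
        have hεker : ε ∈ π.ker := mul_mem hδv (inv_mem hδ)
        have hεconj : ∀ g ∈ Gv v, ε * (δ * α g * δ⁻¹) * ε⁻¹ = β g := by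
          intro g hg
          have h0 : ε * (δ * α g * δ⁻¹) * ε⁻¹ = δv * α g * δv⁻¹ := by
            rw [hε]; group
          rw [h0]; exact hδvconj g hg
        set a0 : Q (j + 1) := q (j + 1) ε with ha0
        have ha0conj : ∀ g ∈ Gv v, a0 * αc g * a0⁻¹ = βq g := by
          intro g hg
          rw [ha0, hαcg, ← map_inv, ← map_mul, ← map_mul, hεconj g hg]
          rfl
        refine ⟨a0, ?_, ha0conj⟩
        refine ha j hjm v αc hsecα a0 ?_ ?_
        · rw [MonoidHom.mem_ker, ha0, hπq]; exact hεker
        · intro g hg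
          have h1 : αc g * a0 * (αc g)⁻¹ * a0⁻¹ = (βq g * (αc g)⁻¹)⁻¹ := by
            rw [← ha0conj g hg]; group
          rw [h1]
          have h2 : βq g * (αc g)⁻¹ = (αc g * (βq g)⁻¹)⁻¹ := by group
          rw [h2]
          exact inv_mem (inv_mem (hdiff g))
      obtain ⟨a, haA, haconj⟩ := hb j hjm αc βq hsecα hsecβ hdiff hlocA
      obtain ⟨d, hdD, hda⟩ := haA
      refine ⟨d * δ, mul_mem (hDsub j (le_of_lt hjm) hdD) hδ, fun g => ?_⟩
      have : d * δ * α g * (d * δ)⁻¹ = d * (δ * α g * δ⁻¹) * d⁻¹ := by group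
      rw [this, map_mul, map_mul, map_inv, hda, ← hαcg]
      exact haconj g
  obtain ⟨δ, hδ, hconj⟩ := key m le_rfl
  have hinj : Function.Injective (q m) := by
    rw [← MonoidHom.ker_eq_bot_iff, hqker, hDm]
  exact ⟨δ, hδ, fun g => hinj (hconj g)⟩
end

section
/- Let Π and G be profinite groups, π : Π → G a continuous surjective homomorphism with kernel Δ, and (N_i)_{i∈ℕ} a descending sequence of closed subgroups of Π, each normal in Π and contained in Δ, with ⋂_{i∈ℕ} N_i = {1}. Let α, β : G → Π be continuous sections of π. If for each i there exists δ_i ∈ Δ such that δ_i·α(g)·δ_i⁻¹·β(g)⁻¹ ∈ N_i for all g ∈ G, then there exists δ ∈ Δ with δ·α(g)·δ⁻¹ = β(g) for all g ∈ G. -/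
/-!
Since `Δ = π⁻¹(1)` is closed, the elements of `Δ` conjugating `α` to `β` modulo `N i` form a
closed subset `C i` of the compact group `Π`, nonempty by hypothesis and decreasing in `i`.
By compactness the `C i` have a common point `δ`; then `δ α(g) δ⁻¹ β(g)⁻¹` lies in every
`N i`, hence is trivial.
-/

namespace Subgroup

variable {P ι : Type*} [Group P]

def conjugatorsMod (N : Subgroup P) (α β : ι → P) : Set P :=
  {δ | ∀ i, δ * α i * δ⁻¹ * (β i)⁻¹ ∈ N}

variable {α β : ι → P}

theorem conjugatorsMod_mono {N M : Subgroup P} (h : N ≤ M) :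
    N.conjugatorsMod α β ⊆ M.conjugatorsMod α β :=
  fun _ hδ i => h (hδ i)

theorem iInter_conjugatorsMod {κ : Type*} (N : κ → Subgroup P) :
    ⋂ n, (N n).conjugatorsMod α β = (⨅ n, N n).conjugatorsMod α β := by
  ext δ
  simp only [Set.mem_iInter, conjugatorsMod, Set.mem_ofPred_eq, mem_iInf]
  exact forall_comm

theorem mem_conjugatorsMod_bot {δ : P} :
    δ ∈ (⊥ : Subgroup P).conjugatorsMod α β ↔ ∀ i, δ * α i * δ⁻¹ = β i := by
  simp only [conjugatorsMod, Set.mem_ofPred_eq, mem_bot, mul_inv_eq_one]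

theorem isClosed_conjugatorsMod [TopologicalSpace P] [ContinuousMul P] [ContinuousInv P]
    {N : Subgroup P} (hN : IsClosed (N : Set P)) : IsClosed (N.conjugatorsMod α β) := by
  simp only [conjugatorsMod, Set.ofPred_forall]
  exact isClosed_iInter fun i => hN.preimage (by fun_prop)

theorem exists_conj_of_forall_exists_conj_mod [TopologicalSpace P] [ContinuousMul P]
    [ContinuousInv P] [CompactSpace P] {κ : Type*} [Nonempty κ] {K : Set P} (hK : IsClosed K)
    {N : κ → Subgroup P} (hNclosed : ∀ n, IsClosed (N n : Set P))
    (hNdir : Directed (· ≥ ·) N) (hNint : ⨅ n, N n = ⊥)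
    (hloc : ∀ n, (K ∩ (N n).conjugatorsMod α β).Nonempty) :
    ∃ δ ∈ K, ∀ i, δ * α i * δ⁻¹ = β i := by
  have hclosed n : IsClosed (K ∩ (N n).conjugatorsMod α β) :=
    hK.inter (isClosed_conjugatorsMod (hNclosed n))
  have hdir : Directed (· ⊇ ·) fun n => K ∩ (N n).conjugatorsMod α β :=
    hNdir.mono_comp (· ≥ ·) (rb := (· ⊇ ·)) (g := fun M => K ∩ M.conjugatorsMod α β)
      fun _ _ h => Set.inter_subset_inter_right K (conjugatorsMod_mono h)
  obtain ⟨δ, hδ⟩ := IsCompact.nonempty_iInter_of_directed_nonempty_isCompact_isClosed _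
    hdir hloc (fun n => (hclosed n).isCompact) hclosed
  rw [← Set.inter_iInter, iInter_conjugatorsMod, hNint] at hδ
  exact ⟨δ, hδ.1, mem_conjugatorsMod_bot.1 hδ.2⟩

end Subgroup

theorem conj_section_of_conj_mod_descending_closed_normal_general
    {P G : Type*} [Group P] [TopologicalSpace P] [IsTopologicalGroup P]
    [CompactSpace P]
    [Group G] [TopologicalSpace G]
    [T2Space G]
    (π : P →* G) (hπcont : Continuous π)
    (N : ℕ → Subgroup P)
    (hNclosed : ∀ i, IsClosed (N i : Set P))
    (hNdesc : ∀ i, N (i + 1) ≤ N i)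
    (hNint : (⨅ i, N i) = ⊥)
    (α β : G →* P)
    (hloc : ∀ i, ∃ δ ∈ π.ker, ∀ g, δ * α g * δ⁻¹ * (β g)⁻¹ ∈ N i) :
    ∃ δ ∈ π.ker, ∀ g, δ * α g * δ⁻¹ = β g :=
  Subgroup.exists_conj_of_forall_exists_conj_mod (isClosed_singleton.preimage hπcont) hNclosed
    (antitone_nat_of_succ_le hNdesc).directed_ge hNint fun i => (hloc i).imp fun _ => id

/-- Let `π : P → G` be a continuous surjective homomorphism of profinite
groups with kernel `Δ = π.ker`, and `(N i)` a descending sequence of closed subgroups of `P`,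
each normal in `P` and contained in `Δ`, with `⋂ i, N i = 1`. If two continuous sections
`α, β` of `π` are conjugate by an element of `Δ` modulo every `N i`, then they are conjugate
by an element of `Δ`. -/
theorem conj_section_of_conj_mod_descending_closed_normal
    {P G : Type*} [Group P] [TopologicalSpace P] [IsTopologicalGroup P]
    [CompactSpace P] [T2Space P] [TotallyDisconnectedSpace P]
    [Group G] [TopologicalSpace G] [IsTopologicalGroup G]
    [CompactSpace G] [T2Space G] [TotallyDisconnectedSpace G]
    (π : P →* G) (hπcont : Continuous π) (hπsurj : Function.Surjective π)
    (N : ℕ → Subgroup P)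
    (hNclosed : ∀ i, IsClosed (N i : Set P))
    (hNnormal : ∀ i, (N i).Normal)
    (hNker : ∀ i, N i ≤ π.ker)
    (hNdesc : ∀ i, N (i + 1) ≤ N i)
    (hNint : (⨅ i, N i) = ⊥)
    (α β : G →* P) (hαcont : Continuous α) (hβcont : Continuous β)
    (hα : ∀ g, π (α g) = g) (hβ : ∀ g, π (β g) = g)
    (hloc : ∀ i, ∃ δ ∈ π.ker, ∀ g, δ * α g * δ⁻¹ * (β g)⁻¹ ∈ N i) :
    ∃ δ ∈ π.ker, ∀ g, δ * α g * δ⁻¹ = β g :=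
  conj_section_of_conj_mod_descending_closed_normal_general π hπcont N hNclosed hNdesc hNint α β
    hloc
end

section
/- Let Π and G be profinite groups, π : Π → G a continuous surjective homomorphism with kernel Δ, and (G_v)_{v∈S} a family of closed subgroups of G. Let (Δ(i))_{i≥0} be the closed derived series of Δ (each Δ(i) is then a closed subgroup of Π normal in Π), and set K = ⋂_{i≥0} Δ(i). Assume that for every i ≥ 1, any two continuous sections of the induced surjection Π/Δ(i) → G whose restrictions to each G_v (v ∈ S) are conjugate by an element of Δ/Δ(i) are conjugate by an element of Δ/Δ(i). Then any two continuous sections of the induced surjection Π/K → G whose restrictions to each G_v (v ∈ S) are conjugate by an element of Δ/K are conjugate by an element of Δ/K. -/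
/-!
The conjugators in `Δ/K` carrying `α` to `β` modulo the image of `Δ(n)` form a decreasing
sequence of closed subsets of the compact group `Π/K`; each is nonempty by the hypothesis at
level `n` (a conjugator in `Δ/Δ(n)` lifts to `Δ/K`). By compactness they have a common element,
and it conjugates `α` to `β` on the nose because `⋂ n, Δ(n) = K` is trivial in `Π/K`.
-/

/-- The closed derived series of the kernel of a homomorphism `π : P → G`, as subgroups of
`P` : `Δ(0) = ker π`, `Δ(i+1)` is the topological closure of `[Δ(i), Δ(i)]`. -/
def kerClosedDerivedSeries {P G : Type*} [Group P] [TopologicalSpace P] [IsTopologicalGroup P]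
    [Group G] (π : P →* G) : ℕ → Subgroup P
  | 0 => π.ker
  | i + 1 =>
      (⁅kerClosedDerivedSeries π i, kerClosedDerivedSeries π i⁆ : Subgroup P).topologicalClosure

open Function Set Topology

namespace MonoidHom

variable {P Q R : Type*} [Group P] [Group Q] [Group R]

theorem isClosed_ker [TopologicalSpace Q] [TopologicalSpace R] [T1Space R] {f : Q →* R}
    (hf : Continuous f) : IsClosed (f.ker : Set Q) :=
  isClosed_singleton.preimage hf

theorem exists_continuous_comp_eq [TopologicalSpace P] [TopologicalSpace Q] [TopologicalSpace R]
    {f : P →* Q} (hf : IsQuotientMap f) {g : P →* R} (hg : Continuous g) (hker : f.ker ≤ g.ker) :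
    ∃ r : Q →* R, Continuous r ∧ r.comp f = g := by
  set r := f.liftOfSurjective hf.surjective ⟨g, hker⟩
  have hr : r.comp f = g := f.liftOfRightInverse_comp _ _ _
  refine ⟨r, hf.continuous_iff.2 ?_, hr⟩
  rwa [← coe_comp, hr]

theorem map_ker_comp_of_surjective {f : P →* Q} (hf : Surjective f) (r : Q →* R) :
    (r.comp f).ker.map f = r.ker := by
  rw [← comap_ker, Subgroup.map_comap_eq_self_of_surjective hf]

theorem iInf_ker_eq_bot_of_comp_eq {ι : Sort*} {R : ι → Type*} [∀ i, Group (R i)] {f : P →* Q}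
    (hf : Surjective f) {g : ∀ i, P →* R i} {r : ∀ i, Q →* R i} (hr : ∀ i, (r i).comp f = g i)
    (hker : f.ker = ⨅ i, (g i).ker) : ⨅ i, (r i).ker = ⊥ := by
  apply Subgroup.comap_injective hf
  simp only [Subgroup.comap_iInf, comap_ker, hr, comap_bot, hker]

end MonoidHom

section DerivedSeries

variable {P G : Type*} [Group P] [TopologicalSpace P] [IsTopologicalGroup P]
  [Group G] [TopologicalSpace G] [T1Space G] {π : P →* G}

theorem isClosed_kerClosedDerivedSeries (hπ : Continuous π) :
    ∀ i, IsClosed (kerClosedDerivedSeries π i : Set P)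
  | 0 => MonoidHom.isClosed_ker hπ
  | _ + 1 => Subgroup.isClosed_topologicalClosure _

theorem antitone_kerClosedDerivedSeries (hπ : Continuous π) :
    Antitone (kerClosedDerivedSeries π) := by
  refine antitone_nat_of_succ_le fun i => ?_
  refine Subgroup.topologicalClosure_minimal _ ?_ (isClosed_kerClosedDerivedSeries hπ i)
  refine Subgroup.commutator_le.2 fun a ha b hb => ?_
  rw [commutatorElement_def]
  exact mul_mem (mul_mem (mul_mem ha hb) (inv_mem ha)) (inv_mem hb)

end DerivedSeries

theorem exists_forall_conj_eq_of_forall_conj_mem {X Q : Type*} [Group Q] [TopologicalSpace Q]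
    [IsTopologicalGroup Q] [CompactSpace Q] {H : Subgroup Q} (hH : IsClosed (H : Set Q))
    {N : ℕ → Subgroup Q} (hN : Antitone N) (hN_closed : ∀ n, IsClosed (N n : Set Q))
    (hN_bot : ⨅ n, N n = ⊥) {a b : X → Q}
    (h : ∀ n, ∃ δ ∈ H, ∀ x, δ * a x * δ⁻¹ * (b x)⁻¹ ∈ N n) :
    ∃ δ ∈ H, ∀ x, δ * a x * δ⁻¹ = b x := by
  set C : ℕ → Set Q := fun n => H ∩ ⋂ x, (fun δ => δ * a x * δ⁻¹ * (b x)⁻¹) ⁻¹' N n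
  have hC_closed : ∀ n, IsClosed (C n) := fun n =>
    hH.inter (isClosed_iInter fun x => (hN_closed n).preimage (by fun_prop))
  obtain ⟨δ, hδ⟩ := IsCompact.nonempty_iInter_of_sequence_nonempty_isCompact_isClosed C
    (fun n => inter_subset_inter_right _ (iInter_mono fun x => preimage_mono (hN n.le_succ)))
    (fun n => by simpa [C, Set.Nonempty] using h n) (hC_closed 0).isCompact hC_closed
  simp only [C, mem_iInter, mem_inter_iff, mem_preimage, SetLike.mem_coe] at hδ
  refine ⟨δ, (hδ 0).1, fun x => ?_⟩
  have hmem : δ * a x * δ⁻¹ * (b x)⁻¹ ∈ ⨅ n, N n := Subgroup.mem_iInf.2 fun n => (hδ n).2 x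
  rwa [hN_bot, Subgroup.mem_bot, mul_inv_eq_one] at hmem

section ConjugacyAlongQuotients

variable {X Q R G : Type*} [Group Q] [Group R] [Group G] (r : Q →* R)
  {πQ : Q →* G} {πR : R →* G} (hπ : πR.comp r = πQ) {a b : X → Q}
include hπ

theorem exists_conj_map_eq {s : Set X} (h : ∃ δ ∈ πQ.ker, ∀ x ∈ s, δ * a x * δ⁻¹ = b x) :
    ∃ δ ∈ πR.ker, ∀ x ∈ s, δ * r (a x) * δ⁻¹ = r (b x) := by
  obtain ⟨δ, hδ, hconj⟩ := h
  refine ⟨r δ, by rwa [MonoidHom.mem_ker, ← MonoidHom.comp_apply, hπ], fun x hx => ?_⟩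
  rw [← hconj x hx, map_mul, map_mul, map_inv]

theorem exists_conj_mul_inv_mem_ker (hr : Surjective r)
    (h : ∃ δ ∈ πR.ker, ∀ x, δ * r (a x) * δ⁻¹ = r (b x)) :
    ∃ δ ∈ πQ.ker, ∀ x, δ * a x * δ⁻¹ * (b x)⁻¹ ∈ r.ker := by
  obtain ⟨δ, hδ, hconj⟩ := h
  obtain ⟨δ, rfl⟩ := hr δ
  refine ⟨δ, by rwa [← hπ, MonoidHom.mem_ker, MonoidHom.comp_apply], fun x => ?_⟩
  rw [MonoidHom.mem_ker, map_mul, map_mul, map_mul, map_inv, map_inv, hconj, mul_inv_cancel]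

end ConjugacyAlongQuotients

theorem local_global_conj_descends_to_prosolvable_quotient_general
    {P G : Type*} [Group P] [TopologicalSpace P] [IsTopologicalGroup P]
    [CompactSpace P]
    [Group G] [TopologicalSpace G]
    [T2Space G]
    (π : P →* G) (hπcont : Continuous π)
    {S : Type*} (Gv : S → Subgroup G)
    (Q : ℕ → Type*) [∀ i, Group (Q i)] [∀ i, TopologicalSpace (Q i)]
    [∀ i, T2Space (Q i)]
    (q : ∀ i, P →* Q i) (hqcont : ∀ i, Continuous (q i))
    (hqsurj : ∀ i, Function.Surjective (q i))
    (hqker : ∀ i, (q i).ker = kerClosedDerivedSeries π i)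
    (πq : ∀ i, Q i →* G) (hπq : ∀ i x, πq i (q i x) = π x)
    (QK : Type*) [Group QK] [TopologicalSpace QK] [IsTopologicalGroup QK]
    [CompactSpace QK] [T2Space QK]
    (qK : P →* QK) (hqKcont : Continuous qK) (hqKsurj : Function.Surjective qK)
    (hqKker : qK.ker = ⨅ i, kerClosedDerivedSeries π i)
    (πK : QK →* G) (hπK : ∀ x, πK (qK x) = π x)
    (hloc : ∀ i, 1 ≤ i → ∀ α β : G →* Q i, Continuous α → Continuous β →
      (∀ g, πq i (α g) = g) → (∀ g, πq i (β g) = g) →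
      (∀ v, ∃ δ ∈ (πq i).ker, ∀ g ∈ Gv v, δ * α g * δ⁻¹ = β g) →
      ∃ δ ∈ (πq i).ker, ∀ g, δ * α g * δ⁻¹ = β g) :
    ∀ α β : G →* QK, Continuous α → Continuous β →
      (∀ g, πK (α g) = g) → (∀ g, πK (β g) = g) →
      (∀ v, ∃ δ ∈ πK.ker, ∀ g ∈ Gv v, δ * α g * δ⁻¹ = β g) →
      ∃ δ ∈ πK.ker, ∀ g, δ * α g * δ⁻¹ = β g := by
  intro α β hα hβ hα_sec hβ_sec hlocal
  have hqK : IsQuotientMap qK := hqKcont.isClosedMap.isQuotientMap hqKcont hqKsurj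
  have hqK_le : ∀ i, qK.ker ≤ (q i).ker := fun i => hqKker ▸ hqker i ▸ iInf_le _ i
  choose r hr_cont hr using fun i =>
    MonoidHom.exists_continuous_comp_eq hqK (hqcont i) (hqK_le i)
  have hr_surj : ∀ i, Surjective (r i) := fun i =>
    .of_comp (g := qK) (by rw [← MonoidHom.coe_comp, hr]; exact hqsurj i)
  have hπqr : ∀ i, (πq i).comp (r i) = πK := fun i =>
    (MonoidHom.cancel_right hqKsurj).1 <| MonoidHom.ext fun p =>
      show πq i ((r i).comp qK p) = πK (qK p) by rw [hr, hπq, hπK]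
  have hπK_cont : Continuous πK :=
    hqK.continuous_iff.2 (by rw [show ⇑πK ∘ ⇑qK = π from funext hπK]; exact hπcont)
  have hker_r : ∀ i, (r i).ker = (kerClosedDerivedSeries π i).map qK := fun i => by
    rw [← hqker, ← hr, MonoidHom.map_ker_comp_of_surjective hqKsurj]
  refine exists_forall_conj_eq_of_forall_conj_mem (MonoidHom.isClosed_ker hπK_cont)
    (N := fun n => (r (n + 1)).ker) (fun m n hmn => ?_)
    (fun n => MonoidHom.isClosed_ker (hr_cont _))
    (MonoidHom.iInf_ker_eq_bot_of_comp_eq hqKsurj (fun n => hr (n + 1)) ?_) fun n => ?_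
  · simp only [hker_r]
    exact Subgroup.map_mono (antitone_kerClosedDerivedSeries hπcont (by omega))
  · simp only [hqker, (antitone_kerClosedDerivedSeries hπcont).iInf_nat_add 1, hqKker]
  · have hsec : ∀ γ : G →* QK, (∀ g, πK (γ g) = g) →
        ∀ g, πq (n + 1) ((r (n + 1)).comp γ g) = g :=
      fun γ hγ g => (DFunLike.congr_fun (hπqr (n + 1)) (γ g)).trans (hγ g)
    exact exists_conj_mul_inv_mem_ker (r (n + 1)) (hπqr _) (hr_surj _)
      (hloc (n + 1) (by omega) _ _ ((hr_cont _).comp hα) ((hr_cont _).comp hβ)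
        (hsec α hα_sec) (hsec β hβ_sec)
        fun v => exists_conj_map_eq (r (n + 1)) (hπqr _) (hlocal v))

/-- Let `π : P → G` be a continuous surjective homomorphism of profinite
groups with kernel `Δ`, `(G_v)_{v ∈ S}` a family of closed subgroups of `G`, `(Δ(i))` the
closed derived series of `Δ`, and `K = ⋂ i, Δ(i)`. The quotients `P/Δ(i)` are realized by
profinite groups `Q i` with continuous surjections `q i` of kernel `Δ(i)` and induced
surjections `πq i : Q i → G`; the quotient `P/K` is realized by `QK` with `qK`, `πK`
similarly. Assume that for every `i ≥ 1`, any two continuous sections of `πq i` whose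
restrictions to each `G_v` are conjugate by an element of `Δ/Δ(i) = ker (πq i)` are conjugate
by an element of `ker (πq i)`. Then any two continuous sections of `πK` whose restrictions to
each `G_v` are conjugate by an element of `Δ/K = ker πK` are conjugate by an element of
`ker πK`. -/
theorem local_global_conj_descends_to_prosolvable_quotient
    {P G : Type*} [Group P] [TopologicalSpace P] [IsTopologicalGroup P]
    [CompactSpace P] [T2Space P] [TotallyDisconnectedSpace P]
    [Group G] [TopologicalSpace G] [IsTopologicalGroup G]
    [CompactSpace G] [T2Space G] [TotallyDisconnectedSpace G]
    (π : P →* G) (hπcont : Continuous π) (hπsurj : Function.Surjective π)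
    {S : Type*} (Gv : S → Subgroup G) (hGv : ∀ v, IsClosed (Gv v : Set G))
    (Q : ℕ → Type*) [∀ i, Group (Q i)] [∀ i, TopologicalSpace (Q i)]
    [∀ i, IsTopologicalGroup (Q i)] [∀ i, CompactSpace (Q i)] [∀ i, T2Space (Q i)]
    [∀ i, TotallyDisconnectedSpace (Q i)]
    (q : ∀ i, P →* Q i) (hqcont : ∀ i, Continuous (q i))
    (hqsurj : ∀ i, Function.Surjective (q i))
    (hqker : ∀ i, (q i).ker = kerClosedDerivedSeries π i)
    (πq : ∀ i, Q i →* G) (hπq : ∀ i x, πq i (q i x) = π x)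
    (QK : Type*) [Group QK] [TopologicalSpace QK] [IsTopologicalGroup QK]
    [CompactSpace QK] [T2Space QK] [TotallyDisconnectedSpace QK]
    (qK : P →* QK) (hqKcont : Continuous qK) (hqKsurj : Function.Surjective qK)
    (hqKker : qK.ker = ⨅ i, kerClosedDerivedSeries π i)
    (πK : QK →* G) (hπK : ∀ x, πK (qK x) = π x)
    (hloc : ∀ i, 1 ≤ i → ∀ α β : G →* Q i, Continuous α → Continuous β →
      (∀ g, πq i (α g) = g) → (∀ g, πq i (β g) = g) →
      (∀ v, ∃ δ ∈ (πq i).ker, ∀ g ∈ Gv v, δ * α g * δ⁻¹ = β g) →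
      ∃ δ ∈ (πq i).ker, ∀ g, δ * α g * δ⁻¹ = β g) :
    ∀ α β : G →* QK, Continuous α → Continuous β →
      (∀ g, πK (α g) = g) → (∀ g, πK (β g) = g) →
      (∀ v, ∃ δ ∈ πK.ker, ∀ g ∈ Gv v, δ * α g * δ⁻¹ = β g) →
      ∃ δ ∈ πK.ker, ∀ g, δ * α g * δ⁻¹ = β g :=
  local_global_conj_descends_to_prosolvable_quotient_general π hπcont Gv Q q hqcont hqsurj hqker πq
    hπq QK qK hqKcont hqKsurj hqKker πK hπK hloc
end
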